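/- Let ξ ~ N(π, 1) with π > 0 and let τ̂(ξ) = (1 − Φ(ξ))/φ(ξ). There exists a constant C (independent of π) such that π·E[|π·τ̂(ξ) − 1|] ≤ C for all π > 0. -/

import Mathlib

open MeasureTheory ProbabilityTheory Filter

/-- Standard normal density `φ`. -/
noncomputable def stdPDF (x : ℝ) : ℝ :=
  (Real.sqrt (2 * Real.pi))⁻¹ * Real.exp (-(x ^ 2) / 2)

/-- Standard normal CDF `Φ`. -/
noncomputable def stdCDF (x : ℝ) : ℝ := ∫ t in Set.Iic x, stdPDF t

/-- Mills-ratio estimator `τ̂(x, σ²) = (1/σ)(1 − Φ(x/σ))/φ(x/σ)`. -/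
noncomputable def millsTau (σ x : ℝ) : ℝ :=
  (1 / σ) * (1 - stdCDF (x / σ)) / stdPDF (x / σ)

/-!
Write `g = p (1 - Φ) - φ` and `h x = (1 - Φ x) e^{p x}`, so that `h' = e^{p x} g`. Since the
`N(p, 1)` density is `φ x e^{p x - p² / 2}`, the expectation equals `e^{-p² / 2} ∫ |h'|`.
As `g' = (x - p) φ`, `g` decreases on `(-∞, p]` from its limit `p > 0` and increases on
`[p, ∞)` to its limit `0`, so it changes sign exactly once, at some `x₀`. Hence `h` rises and
then falls, vanishes at `±∞`, and `∫ |h'| = 2 h x₀`. Using `p (1 - Φ x₀) = φ x₀`, the scaled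
error is `2 φ (x₀ - p) ≤ 2 / √(2π)`.
-/

open Set Topology

lemma integrableOn_Iic_deriv_of_nonneg {h H : ℝ → ℝ} {a : ℝ}
    (hderiv : ∀ x ∈ Iic a, HasDerivAt h (H x) x) (hnonneg : ∀ x ∈ Iic a, 0 ≤ H x)
    (hbot : Tendsto h atBot (𝓝 0)) : IntegrableOn H (Iic a) := by
  have hcont : ∀ i ≤ a, ContinuousOn h (Icc i a) := fun i _ x hx =>
    (hderiv x hx.2).continuousAt.continuousWithinAt
  have hint : ∀ i ≤ a, IntegrableOn H (Ioc i a) := fun i hi =>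
    intervalIntegral.integrableOn_deriv_of_nonneg (hcont i hi) (fun x hx => hderiv x hx.2.le)
      (fun x hx => hnonneg x hx.2.le)
  refine integrableOn_Iic_of_intervalIntegral_norm_tendsto (a := fun i => i) (h a) a (fun i => ?_)
    tendsto_id ?_
  · rcases le_or_gt i a with hi | hi
    · exact hint i hi
    · rw [Ioc_eq_empty (not_lt.2 hi.le)]
      exact integrableOn_empty
  · have hFTC : ∀ᶠ i in atBot, h a - h i = ∫ x in i..a, ‖H x‖ := by
      filter_upwards [eventually_le_atBot a] with i hi
      rw [intervalIntegral.integral_congr fun x hx => Real.norm_of_nonneg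
        (hnonneg x (by rw [uIcc_of_le hi] at hx; exact hx.2)),
        intervalIntegral.integral_eq_sub_of_hasDerivAt_of_le hi (hcont i hi)
          (fun x hx => hderiv x hx.2.le) ((intervalIntegrable_iff_integrableOn_Ioc_of_le hi).2
          (hint i hi))]
    simpa using (tendsto_const_nhds.sub hbot).congr' hFTC

theorem integral_abs_deriv_eq_two_mul {h H : ℝ → ℝ} {a : ℝ}
    (hderiv : ∀ x, HasDerivAt h (H x) x)
    (hnonneg : ∀ x ≤ a, 0 ≤ H x) (hnonpos : ∀ x, a ≤ x → H x ≤ 0)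
    (hbot : Tendsto h atBot (𝓝 0)) (htop : Tendsto h atTop (𝓝 0)) :
    ∫ x, |H x| = 2 * h a := by
  have hIic : IntegrableOn H (Iic a) :=
    integrableOn_Iic_deriv_of_nonneg (fun x _ => hderiv x) hnonneg hbot
  have hIoi : IntegrableOn H (Ioi a) :=
    integrableOn_Ioi_deriv_of_nonpos' (fun x _ => hderiv x) (fun x hx => hnonpos x hx.le) htop
  have hleft : ∫ x in Iic a, |H x| = h a := by
    rw [setIntegral_congr_fun measurableSet_Iic fun x hx => abs_of_nonneg (hnonneg x hx),
      integral_Iic_of_hasDerivAt_of_tendsto' (fun x _ => hderiv x) hIic hbot, sub_zero]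
  have hright : ∫ x in Ioi a, |H x| = h a := by
    rw [setIntegral_congr_fun measurableSet_Ioi fun x hx => abs_of_nonpos (hnonpos x (le_of_lt hx)),
      integral_neg, integral_Ioi_of_hasDerivAt_of_nonpos' (fun x _ => hderiv x)
        (fun x hx => hnonpos x hx.le) htop, zero_sub, neg_neg]
  rw [← intervalIntegral.integral_Iic_add_Ioi hIic.abs hIoi.abs, hleft, hright, two_mul]

lemma exists_sign_change_of_antitoneOn_of_monotoneOn {g : ℝ → ℝ} {a b : ℝ}
    (hg : Continuous g) (hanti : AntitoneOn g (Iic a)) (hmono : MonotoneOn g (Ici a))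
    (htop : Tendsto g atTop (𝓝 0)) (hb : 0 < g b) :
    ∃ x₀, g x₀ = 0 ∧ (∀ x ≤ x₀, 0 ≤ g x) ∧ ∀ x, x₀ ≤ x → g x ≤ 0 := by
  have hIci : ∀ x, a ≤ x → g x ≤ 0 := fun x hx =>
    ge_of_tendsto htop ((eventually_ge_atTop x).mono fun y hy => hmono hx (hx.trans hy) hy)
  have hba : b ≤ a := by
    by_contra! hab
    linarith [hIci b hab.le]
  obtain ⟨x₀, ⟨-, hx₀a⟩, hx₀⟩ : ∃ x₀ ∈ Icc b a, g x₀ = 0 :=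
    intermediate_value_Icc' hba hg.continuousOn ⟨hIci a le_rfl, hb.le⟩
  refine ⟨x₀, hx₀, fun x hx => hx₀ ▸ hanti (hx.trans hx₀a) hx₀a hx, fun x hx => ?_⟩
  rcases le_total x a with hxa | hax
  · exact hx₀ ▸ hanti hx₀a hxa hx
  · exact hIci x hax

-- `Real` is not opened globally: it would turn the bound variable `π` of `stmt7` into `Real.pi`.
section

open Real

lemma stdPDF_eq_gaussianPDFReal : stdPDF = gaussianPDFReal 0 1 := by
  ext x
  simp [stdPDF, gaussianPDFReal]

lemma gaussianPDFReal_eq_stdPDF_sub (μ x : ℝ) : gaussianPDFReal μ 1 x = stdPDF (x - μ) := by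
  rw [stdPDF_eq_gaussianPDFReal, gaussianPDFReal_sub, zero_add]

lemma stdPDF_pos (x : ℝ) : 0 < stdPDF x := by
  rw [stdPDF_eq_gaussianPDFReal]
  exact gaussianPDFReal_pos _ _ _ one_ne_zero

lemma stdPDF_le (x : ℝ) : stdPDF x ≤ (√(2 * π))⁻¹ :=
  mul_le_of_le_one_right (by positivity) (exp_le_one_iff.2 (by nlinarith [sq_nonneg x]))

lemma stdPDF_neg (x : ℝ) : stdPDF (-x) = stdPDF x := by
  simp [stdPDF]

lemma stdPDF_sub (x μ : ℝ) : stdPDF (x - μ) = stdPDF x * exp (μ * x - μ ^ 2 / 2) := by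
  rw [stdPDF, stdPDF, mul_assoc, ← exp_add]
  ring_nf

lemma integrable_stdPDF : Integrable stdPDF :=
  stdPDF_eq_gaussianPDFReal ▸ integrable_gaussianPDFReal 0 1

lemma integral_stdPDF : ∫ x, stdPDF x = 1 :=
  stdPDF_eq_gaussianPDFReal ▸ integral_gaussianPDFReal_eq_one 0 one_ne_zero

lemma continuous_stdPDF : Continuous stdPDF := by
  unfold stdPDF
  fun_prop

lemma hasDerivAt_stdPDF (x : ℝ) : HasDerivAt stdPDF (-x * stdPDF x) x := by
  have hsq : HasDerivAt (fun x : ℝ => -(x ^ 2) / 2) (-x) x := by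
    refine ((hasDerivAt_pow 2 x).const_mul (-1 / 2 : ℝ)).congr_deriv (by push_cast; ring)
      |>.congr_of_eventuallyEq (.of_forall fun y => by ring)
  exact (hsq.exp.const_mul (√(2 * π))⁻¹).congr_deriv (by rw [stdPDF]; ring)

lemma tendsto_stdPDF_atTop : Tendsto stdPDF atTop (𝓝 0) := by
  have hsq : Tendsto (fun x : ℝ => -(x ^ 2) / 2) atTop atBot :=
    (tendsto_neg_atTop_atBot.comp (tendsto_pow_atTop two_ne_zero)).atBot_div_const two_pos
  have := (tendsto_exp_atBot.comp hsq).const_mul (√(2 * π))⁻¹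
  rwa [mul_zero] at this

lemma tendsto_stdPDF_atBot : Tendsto stdPDF atBot (𝓝 0) := by
  simpa [Function.comp_def, stdPDF_neg] using tendsto_stdPDF_atTop.comp tendsto_neg_atBot_atTop

lemma integrable_mul_stdPDF : Integrable fun t => t * stdPDF t := by
  convert (integrable_mul_exp_neg_mul_sq (b := 1 / 2) (by norm_num)).const_mul (√(2 * π))⁻¹
    using 2 with t
  rw [stdPDF]
  ring_nf

lemma integral_Ioi_mul_stdPDF (x : ℝ) : ∫ t in Ioi x, t * stdPDF t = stdPDF x := by
  simpa using integral_Ioi_of_hasDerivAt_of_tendsto' (f := fun t => -stdPDF t)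
    (fun t _ => (hasDerivAt_stdPDF t).neg.congr_deriv (by ring))
    integrable_mul_stdPDF.integrableOn tendsto_stdPDF_atTop.neg

lemma stdCDF_eq_cdf : stdCDF = cdf (gaussianReal 0 1) := by
  ext x
  rw [cdf_eq_real, measureReal_def, gaussianReal_apply_eq_integral _ one_ne_zero,
    ENNReal.toReal_ofReal (setIntegral_nonneg measurableSet_Iic
      fun t _ => gaussianPDFReal_nonneg 0 1 t), stdCDF, stdPDF_eq_gaussianPDFReal]

lemma one_sub_stdCDF_eq (x : ℝ) : 1 - stdCDF x = ∫ t in Ioi x, stdPDF t := by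
  rw [← integral_stdPDF, stdCDF, ← intervalIntegral.integral_Iic_add_Ioi
    integrable_stdPDF.integrableOn integrable_stdPDF.integrableOn, add_sub_cancel_left]

lemma one_sub_stdCDF_le_stdPDF {x : ℝ} (hx : 1 ≤ x) : 1 - stdCDF x ≤ stdPDF x := by
  rw [one_sub_stdCDF_eq, ← integral_Ioi_mul_stdPDF x]
  refine setIntegral_mono_on integrable_stdPDF.integrableOn integrable_mul_stdPDF.integrableOn
    measurableSet_Ioi fun t ht => ?_
  nlinarith [stdPDF_pos t, hx.trans (le_of_lt ht)]

lemma hasDerivAt_stdCDF (x : ℝ) : HasDerivAt stdCDF (stdPDF x) x := by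
  have hsplit : stdCDF = fun y => stdCDF 0 + ∫ t in (0 : ℝ)..y, stdPDF t := by
    ext y
    rw [stdCDF, stdCDF, ← intervalIntegral.integral_Iic_sub_Iic integrable_stdPDF.integrableOn
      integrable_stdPDF.integrableOn, add_sub_cancel]
  rw [hsplit]
  exact (intervalIntegral.integral_hasDerivAt_right integrable_stdPDF.intervalIntegrable
    (continuous_stdPDF.stronglyMeasurableAtFilter _ _) continuous_stdPDF.continuousAt).const_add _

lemma tendsto_stdCDF_atTop : Tendsto stdCDF atTop (𝓝 1) :=
  stdCDF_eq_cdf ▸ tendsto_cdf_atTop _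

lemma tendsto_stdCDF_atBot : Tendsto stdCDF atBot (𝓝 0) :=
  stdCDF_eq_cdf ▸ tendsto_cdf_atBot _

lemma one_sub_stdCDF_mem_Icc (x : ℝ) : 1 - stdCDF x ∈ Icc 0 1 := by
  rw [stdCDF_eq_cdf]
  exact ⟨sub_nonneg.2 (cdf_le_one _ x), sub_le_self _ (cdf_nonneg _ x)⟩

lemma hasDerivAt_one_sub_stdCDF_mul_exp (p x : ℝ) :
    HasDerivAt (fun y => (1 - stdCDF y) * exp (p * y))
      (exp (p * x) * (p * (1 - stdCDF x) - stdPDF x)) x := by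
  have hexp : HasDerivAt (fun y => exp (p * y)) (exp (p * x) * p) x := by
    simpa using ((hasDerivAt_id x).const_mul p).exp
  exact (((hasDerivAt_stdCDF x).const_sub 1).mul hexp).congr_deriv (by ring)

lemma tendsto_one_sub_stdCDF_mul_exp_atTop (p : ℝ) :
    Tendsto (fun y => (1 - stdCDF y) * exp (p * y)) atTop (𝓝 0) := by
  have hdom : Tendsto (fun y => exp (p ^ 2 / 2) * stdPDF (y - p)) atTop (𝓝 0) := by
    simpa [sub_eq_add_neg] using (tendsto_stdPDF_atTop.comp
      (tendsto_atTop_add_const_right _ (-p) tendsto_id)).const_mul (exp (p ^ 2 / 2))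
  refine tendsto_of_tendsto_of_tendsto_of_le_of_le' tendsto_const_nhds hdom
    (.of_forall fun y => mul_nonneg (one_sub_stdCDF_mem_Icc y).1 (exp_pos _).le) ?_
  filter_upwards [eventually_ge_atTop 1] with y hy
  calc (1 - stdCDF y) * exp (p * y) ≤ stdPDF y * exp (p * y) :=
        mul_le_mul_of_nonneg_right (one_sub_stdCDF_le_stdPDF hy) (exp_pos _).le
    _ = exp (p ^ 2 / 2) * stdPDF (y - p) := by
        rw [stdPDF_sub, mul_left_comm, ← exp_add]
        ring_nf

lemma tendsto_one_sub_stdCDF_mul_exp_atBot {p : ℝ} (hp : 0 < p) :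
    Tendsto (fun y => (1 - stdCDF y) * exp (p * y)) atBot (𝓝 0) :=
  tendsto_of_tendsto_of_tendsto_of_le_of_le tendsto_const_nhds
    (tendsto_exp_atBot.comp (tendsto_id.const_mul_atBot hp))
    (fun y => mul_nonneg (one_sub_stdCDF_mem_Icc y).1 (exp_pos _).le)
    (fun y => mul_le_of_le_one_left (exp_pos _).le (one_sub_stdCDF_mem_Icc y).2)

lemma exists_sign_change_mul_one_sub_stdCDF_sub_stdPDF {p : ℝ} (hp : 0 < p) :
    ∃ x₀, p * (1 - stdCDF x₀) = stdPDF x₀ ∧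
      (∀ x ≤ x₀, 0 ≤ p * (1 - stdCDF x) - stdPDF x) ∧
      ∀ x, x₀ ≤ x → p * (1 - stdCDF x) - stdPDF x ≤ 0 := by
  set g := fun x => p * (1 - stdCDF x) - stdPDF x
  have hderiv : ∀ x, HasDerivAt g ((x - p) * stdPDF x) x := fun x =>
    ((((hasDerivAt_stdCDF x).const_sub 1).const_mul p).sub (hasDerivAt_stdPDF x)).congr_deriv
      (by ring)
  have hcont : Continuous g := continuous_iff_continuousAt.2 fun x => (hderiv x).continuousAt
  have hanti : AntitoneOn g (Iic p) :=
    antitoneOn_of_hasDerivWithinAt_nonpos (convex_Iic p) hcont.continuousOn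
      (fun x _ => (hderiv x).hasDerivWithinAt) fun x hx =>
        mul_nonpos_of_nonpos_of_nonneg
          (by rw [interior_Iic, mem_Iio] at hx; linarith) (stdPDF_pos x).le
  have hmono : MonotoneOn g (Ici p) :=
    monotoneOn_of_hasDerivWithinAt_nonneg (convex_Ici p) hcont.continuousOn
      (fun x _ => (hderiv x).hasDerivWithinAt) fun x hx =>
        mul_nonneg (by rw [interior_Ici, mem_Ioi] at hx; linarith) (stdPDF_pos x).le
  have htop : Tendsto g atTop (𝓝 0) := by
    simpa using ((tendsto_stdCDF_atTop.const_sub 1).const_mul p).sub tendsto_stdPDF_atTop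
  have hbot : Tendsto g atBot (𝓝 p) := by
    simpa using ((tendsto_stdCDF_atBot.const_sub 1).const_mul p).sub tendsto_stdPDF_atBot
  obtain ⟨b, hb⟩ := (hbot.eventually (eventually_gt_nhds hp)).exists
  obtain ⟨x₀, hx₀, hpos, hneg⟩ :=
    exists_sign_change_of_antitoneOn_of_monotoneOn hcont hanti hmono htop hb
  exact ⟨x₀, sub_eq_zero.1 hx₀, hpos, hneg⟩

lemma integral_abs_mul_millsTau_sub_one (p : ℝ) :
    ∫ x, |p * millsTau 1 x - 1| ∂(gaussianReal p 1)
      = exp (-(p ^ 2) / 2) * ∫ x, |exp (p * x) * (p * (1 - stdCDF x) - stdPDF x)| := by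
  rw [integral_gaussianReal_eq_integral_smul one_ne_zero, ← integral_const_mul]
  congr 1 with x
  have hφ := stdPDF_pos x
  have hτ : p * millsTau 1 x - 1 = (p * (1 - stdCDF x) - stdPDF x) / stdPDF x := by
    simp only [millsTau, div_one]
    field_simp
  rw [gaussianPDFReal_eq_stdPDF_sub, stdPDF_sub, smul_eq_mul, hτ, abs_div, abs_of_pos hφ, abs_mul,
    abs_of_pos (exp_pos _), show p * x - p ^ 2 / 2 = -(p ^ 2) / 2 + p * x by ring, exp_add]
  field_simp

end

/-- Uniform-in-π bound: ∃ C, ∀ π > 0, π·E[|π·τ̂(ξ) − 1|] ≤ C for ξ ~ N(π,1). -/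
theorem stmt7 :
    ∃ C : ℝ, ∀ π : ℝ, 0 < π →
      π * ∫ x, |π * millsTau 1 x - 1| ∂(gaussianReal π 1) ≤ C := by
  refine ⟨2 * (√(2 * Real.pi))⁻¹, fun p hp => ?_⟩
  obtain ⟨x₀, hx₀, hpos, hneg⟩ := exists_sign_change_mul_one_sub_stdCDF_sub_stdPDF hp
  have hvar := integral_abs_deriv_eq_two_mul (hasDerivAt_one_sub_stdCDF_mul_exp p)
    (fun x hx => mul_nonneg (Real.exp_pos _).le (hpos x hx))
    (fun x hx => mul_nonpos_of_nonneg_of_nonpos (Real.exp_pos _).le (hneg x hx))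
    (tendsto_one_sub_stdCDF_mul_exp_atBot hp) (tendsto_one_sub_stdCDF_mul_exp_atTop p)
  calc p * ∫ x, |p * millsTau 1 x - 1| ∂(gaussianReal p 1)
      = 2 * (stdPDF x₀ * Real.exp (p * x₀ - p ^ 2 / 2)) := by
        rw [integral_abs_mul_millsTau_sub_one, hvar, ← hx₀,
          show p * x₀ - p ^ 2 / 2 = -(p ^ 2) / 2 + p * x₀ by ring, Real.exp_add]
        ring
    _ = 2 * stdPDF (x₀ - p) := by rw [stdPDF_sub]
    _ ≤ 2 * (√(2 * Real.pi))⁻¹ := by gcongr; exact stdPDF_le _
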